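/- arXiv:math/0506349 — 3 statements merged into one kernel-verified Lean document; each statement's English description precedes it below -/
import Mathlib

section
/- Let E be a unital algebra over a commutative ring A equipped with a conjugation σ. Then σ ∘ σ is the identity on E. -/
/-- In a unital algebra `E` over a commutative ring `A` with a conjugation `σ`,
the conjugation is involutive: `σ (σ x) = x`. -/
theorem conj_involutive {A E : Type*} [CommRing A] [NonAssocRing E] [Module A E]
    [SMulCommClass A E E] [IsScalarTower A E E]
    (σ : E → E)
    (hbij : Function.Bijective σ)
    (hadd : ∀ x y : E, σ (x + y) = σ x + σ y)
    (hsmul : ∀ (a : A) (x : E), σ (a • x) = a • σ x)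
    (hone : σ 1 = 1)
    (hmul : ∀ x y : E, σ (x * y) = σ y * σ x)
    (htr : ∀ x : E, ∃ a : A, x + σ x = a • (1 : E))
    (hnm : ∀ x : E, ∃ a : A, x * σ x = a • (1 : E)) :
    ∀ x : E, σ (σ x) = x := by
  intro x
  obtain ⟨a, h⟩ := htr x
  have h2 := congrArg σ h
  rw [hadd, hsmul, hone] at h2
  have : σ x + σ (σ x) = x + σ x := h2.trans h.symm
  exact add_left_cancel ((add_comm x (σ x)) ▸ this)
end

section
/- In a Cayley algebra E over A, for every x ∈ E and every natural number n, N(xⁿ) = N(x)ⁿ, where N is the Cayley norm N(x) = x × σ(x) (viewed as an element of the commutative ring A·e, and where powers of x are well-defined since the submodule generated by e and x is associative and commutative). -/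
/-- Natural powers of an element in a (possibly non-associative) unital ring. -/
def npowE {E : Type*} [NonAssocRing E] (x : E) : ℕ → E
  | 0 => 1
  | n + 1 => x * npowE x n

/-- In a Cayley algebra `E` over `A`, the Cayley norm `N(x) = x * σ x` is
multiplicative on powers: `N(xⁿ) = N(x)ⁿ` for every natural number `n`. -/
theorem cayleyNorm_npow {A E : Type*} [CommRing A] [NonAssocRing E]
    [Module A E] [SMulCommClass A E E] [IsScalarTower A E E]
    (σ : E → E)
    (hbij : Function.Bijective σ)
    (hadd : ∀ x y : E, σ (x + y) = σ x + σ y)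
    (hsmul : ∀ (a : A) (x : E), σ (a • x) = a • σ x)
    (hone : σ 1 = 1)
    (hmul : ∀ x y : E, σ (x * y) = σ y * σ x)
    (htr : ∀ x : E, ∃ a : A, x + σ x = a • (1 : E))
    (hnm : ∀ x : E, ∃ a : A, x * σ x = a • (1 : E)) :
    ∀ (x : E) (n : ℕ), npowE x n * σ (npowE x n) = npowE (x * σ x) n := by
  intro x n
  obtain ⟨t, ht⟩ := htr x
  obtain ⟨a, ha⟩ := hnm x
  -- the right-hand side
  have hR : ∀ m : ℕ, npowE (x * σ x) m = a ^ m • (1 : E) := by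
    intro m
    induction m with
    | zero => simp [npowE]
    | succ m ih =>
        rw [npowE, ih, ha, smul_mul_assoc, one_mul, smul_smul, pow_succ, mul_comm]
  -- x * x = t • x - a • 1
  have hsq : x * x = t • x - a • (1 : E) := by
    have hσx : σ x = t • (1 : E) - x := by
      rw [eq_sub_iff_add_eq, add_comm]; exact ht
    have := ha
    rw [hσx, mul_sub, mul_smul_comm, mul_one] at this
    rw [sub_eq_iff_eq_add] at this
    rw [this]; abel
  -- every power lies in the span of 1 and x, with a norm invariant
  have key : ∀ m : ℕ, ∃ p q : A, npowE x m = p • (1 : E) + q • x ∧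
      p ^ 2 + p * q * t + q ^ 2 * a = a ^ m := by
    intro m
    induction m with
    | zero => exact ⟨1, 0, by simp [npowE], by ring⟩
    | succ m ih =>
        obtain ⟨p, q, hpq, hinv⟩ := ih
        refine ⟨-(q * a), p + q * t, ?_, by linear_combination a * hinv⟩
        rw [npowE, hpq, mul_add, mul_smul_comm, mul_smul_comm, mul_one, hsq]
        module
  obtain ⟨p, q, hpq, hinv⟩ := key n
  have hσ : σ (p • (1 : E) + q • x) = p • (1 : E) + q • σ x := by
    rw [hadd, hsmul, hsmul, hone]
  rw [hR, hpq, hσ]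
  have hx : x * (p • (1 : E) + q • σ x) = p • x + (q * a) • (1 : E) := by
    rw [mul_add, mul_smul_comm, mul_one, mul_smul_comm, ha, smul_smul]
  calc (p • (1 : E) + q • x) * (p • (1 : E) + q • σ x)
      = p • (p • (1 : E) + q • σ x) + q • (x * (p • (1 : E) + q • σ x)) := by
        rw [add_mul, smul_mul_assoc, one_mul, smul_mul_assoc]
    _ = (p ^ 2 + q ^ 2 * a) • (1 : E) + (p * q) • (x + σ x) := by
        rw [hx]; module
    _ = (p ^ 2 + p * q * t + q ^ 2 * a) • (1 : E) := by
        rw [ht, smul_smul]; module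
    _ = a ^ n • (1 : E) := by rw [hinv]
end

section
/- Let E be an alternative Cayley algebra over a commutative ring A. The set E* of invertible elements of E, under multiplication, forms a Moufang loop. -/
theorem alin {E : Type*} [NonAssocRing E]
    (haltl : ∀ x y : E, x * (x * y) = (x * x) * y)
    (u v w : E) : u * (v * w) + v * (u * w) = (u * v) * w + (v * u) * w := by
  have h := haltl (u + v) w
  simp only [add_mul, mul_add] at h
  linear_combination (norm := abel1) h - haltl u w - haltl v w

theorem blin {E : Type*} [NonAssocRing E]
    (haltr : ∀ x y : E, (x * y) * y = x * (y * y))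
    (u v w : E) : (u * v) * w + (u * w) * v = u * (v * w) + u * (w * v) := by
  have h := haltr u (v + w)
  simp only [add_mul, mul_add] at h
  linear_combination (norm := abel1) h - haltr u v - haltr u w

theorem aux_moufang {E : Type*} [NonAssocRing E]
    (haltl : ∀ x y : E, x * (x * y) = (x * x) * y)
    (haltr : ∀ x y : E, (x * y) * y = x * (y * y)) (x y z : E) :
    (x * y) * (z * x) = (x * (y * z)) * x := by
  have h0 : x * (x * (y * z)) = (x * x) * (y * z) := haltl x (y * z)
  have h1 : x * (y * (x * z)) + y * (x * (x * z)) = (x * y) * (x * z) + (y * x) * (x * z) := alin haltl x y (x * z)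
  have h2 : ((z * x) * x) * y + ((z * x) * y) * x = (z * x) * (x * y) + (z * x) * (y * x) := blin haltr (z * x) x y
  have h3 : ((x * y) * x) * z + ((x * y) * z) * x = (x * y) * (x * z) + (x * y) * (z * x) := blin haltr (x * y) x z
  have h4 : ((y * x) * x) * z + ((y * x) * z) * x = (y * x) * (x * z) + (y * x) * (z * x) := blin haltr (y * x) x z
  have h5 : x * ((x * y) * z) + (x * y) * (x * z) = (x * (x * y)) * z + ((x * y) * x) * z := alin haltl x (x * y) z
  have h6 : (z * x) * (x * y) + (z * (x * y)) * x = z * (x * (x * y)) + z * ((x * y) * x) := blin haltr z x (x * y)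
  have h7 : (y * x) * (x * z) + (y * (x * z)) * x = y * (x * (x * z)) + y * ((x * z) * x) := blin haltr y x (x * z)
  have h8 : x * ((y * x) * z) + (y * x) * (x * z) = (x * (y * x)) * z + ((y * x) * x) * z := alin haltl x (y * x) z
  have h9 : (y * x) * (z * x) + (y * (z * x)) * x = y * (x * (z * x)) + y * ((z * x) * x) := blin haltr y x (z * x)
  have h10 : ((x * x) * y) * z + ((x * x) * z) * y = (x * x) * (y * z) + (x * x) * (z * y) := blin haltr (x * x) y z
  have h11 : y * ((z * x) * x) + (z * x) * (y * x) = (y * (z * x)) * x + ((z * x) * y) * x := alin haltl y (z * x) x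
  have h12 : z * ((x * x) * y) + (x * x) * (z * y) = (z * (x * x)) * y + ((x * x) * z) * y := alin haltl z (x * x) y
  have h13 : z * ((x * y) * x) + (x * y) * (z * x) = (z * (x * y)) * x + ((x * y) * z) * x := alin haltl z (x * y) x
  have h14 : z * (x * (x * y)) = z * ((x * x) * y) := by rw [haltl]
  have h15 : (x * (x * y)) * z = ((x * x) * y) * z := by rw [haltl]
  have h16 : ((y * x) * x) * z = (y * (x * x)) * z := by rw [haltr]
  have h17 : y * ((z * x) * x) = y * (z * (x * x)) := by rw [haltr]
  have h18 : ((z * x) * x) * y = (z * (x * x)) * y := by rw [haltr]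
  have h19 : (x * (y * x)) * z + (y * (x * x)) * z = ((x * y) * x) * z + ((y * x) * x) * z := by have := congrArg (fun t => t * z) (alin haltl x y x); simpa [add_mul] using this
  have h20 : x * (x * (y * z)) + x * (y * (x * z)) = x * ((x * y) * z) + x * ((y * x) * z) := by have := congrArg (fun t => x * t) (alin haltl x y z); simpa [mul_add] using this
  have h21 : (x * (y * z)) * x + (y * (x * z)) * x = ((x * y) * z) * x + ((y * x) * z) * x := by have := congrArg (fun t => t * x) (alin haltl x y z); simpa [add_mul] using this
  have h22 : y * (x * (z * x)) + y * (z * (x * x)) = y * ((x * z) * x) + y * ((z * x) * x) := by have := congrArg (fun t => y * t) (alin haltl x z x); simpa [mul_add] using this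
  linear_combination (norm := abel1) h0 + h1 - h2 - h3 - h3 - h4 - h5 - h6 + h7 - h8 - h9 - h10 - h11 - h12 - h13 - h14 - h15 - h16 - h17 + h18 - h19 - h20 - h21 - h22

/-- In an alternative Cayley algebra `E` over `A`, the set `E*` of invertible
elements is a Moufang loop under multiplication: it contains `1`, is closed
under multiplication, left and right division in it have unique solutions,
and the Moufang identity `(x*y)*(z*x) = (x*(y*z))*x` holds. -/
theorem alternative_cayley_units_moufang_loop {A E : Type*} [CommRing A]
    [NonAssocRing E] [Module A E] [SMulCommClass A E E] [IsScalarTower A E E]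
    (σ : E → E)
    (hbij : Function.Bijective σ)
    (hadd : ∀ x y : E, σ (x + y) = σ x + σ y)
    (hsmul : ∀ (a : A) (x : E), σ (a • x) = a • σ x)
    (hone : σ 1 = 1)
    (hmul : ∀ x y : E, σ (x * y) = σ y * σ x)
    (htr : ∀ x : E, ∃ a : A, x + σ x = a • (1 : E))
    (hnm : ∀ x : E, ∃ a : A, x * σ x = a • (1 : E))
    (haltl : ∀ x y : E, x * (x * y) = (x * x) * y)
    (haltr : ∀ x y : E, (x * y) * y = x * (y * y)) :
    (1 : E) ∈ {x : E | ∃ y, x * y = 1 ∧ y * x = 1} ∧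
    (∀ x ∈ {x : E | ∃ y, x * y = 1 ∧ y * x = 1},
      ∀ y ∈ {x : E | ∃ y, x * y = 1 ∧ y * x = 1},
        x * y ∈ {x : E | ∃ y, x * y = 1 ∧ y * x = 1}) ∧
    (∀ a ∈ {x : E | ∃ y, x * y = 1 ∧ y * x = 1},
      ∀ b ∈ {x : E | ∃ y, x * y = 1 ∧ y * x = 1},
        (∃! x, x ∈ {x : E | ∃ y, x * y = 1 ∧ y * x = 1} ∧ a * x = b) ∧
        (∃! y, y ∈ {x : E | ∃ y, x * y = 1 ∧ y * x = 1} ∧ y * a = b)) ∧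
    (∀ x ∈ {x : E | ∃ y, x * y = 1 ∧ y * x = 1},
      ∀ y ∈ {x : E | ∃ y, x * y = 1 ∧ y * x = 1},
      ∀ z ∈ {x : E | ∃ y, x * y = 1 ∧ y * x = 1},
        (x * y) * (z * x) = (x * (y * z)) * x) := by
  -- every invertible element has its inverse in the span of `1` and itself
  have key : ∀ x y : E, x * y = 1 → y * x = 1 →
      ∃ t n : A, x = t • (1 : E) - n • y := by
    intro x y hxy hyx
    obtain ⟨t, ht⟩ := htr x
    obtain ⟨n, hn⟩ := hnm x
    have hσ : σ x = t • (1 : E) - x := eq_sub_of_add_eq' ht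
    rw [hσ, mul_sub, mul_smul_comm, mul_one] at hn
    have hx2 : x * x = t • x - n • (1 : E) := by
      linear_combination (norm := abel1) -hn
    have h6 : y * (x * x) = x := by rw [← haltr y x, hyx, one_mul]
    refine ⟨t, n, ?_⟩
    calc x = y * (x * x) := h6.symm
      _ = t • (1 : E) - n • y := by
          rw [hx2]
          simp only [mul_sub, mul_smul_comm, mul_one, hyx]
  -- left inverse property
  have lip : ∀ x y : E, x * y = 1 → y * x = 1 → ∀ z : E, y * (x * z) = z := by
    intro x y hxy hyx z
    obtain ⟨t, n, hx⟩ := key x y hxy hyx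
    have e : (y * x) * z = y * (x * z) := by
      rw [hx]
      simp only [mul_sub, sub_mul, mul_smul_comm, smul_mul_assoc, mul_one,
        one_mul]
      rw [haltl]
    rw [hyx, one_mul] at e
    exact e.symm
  -- right inverse property
  have rip : ∀ x y : E, x * y = 1 → y * x = 1 → ∀ z : E, (z * y) * x = z := by
    intro x y hxy hyx z
    obtain ⟨t, n, hx⟩ := key x y hxy hyx
    have e : (z * y) * x = z * (y * x) := by
      rw [hx]
      simp only [mul_sub, mul_smul_comm, mul_one]
      rw [haltr]
    rw [hyx, mul_one] at e
    exact e
  have hmouf : ∀ x y z : E, (x * y) * (z * x) = (x * (y * z)) * x :=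
    aux_moufang haltl haltr
  -- closure of invertibles under multiplication
  have closure : ∀ x y u v : E, x * u = 1 → u * x = 1 → y * v = 1 → v * y = 1 →
      (x * y) * (v * u) = 1 ∧ (v * u) * (x * y) = 1 := by
    intro x y u v hxu hux hyv hvy
    obtain ⟨s, m, hu⟩ := key u x hux hxu
    obtain ⟨c, d, hy⟩ := key y v hyv hvy
    constructor
    · have h1 : (x * y) * v = x := by
        have e : (x * y) * v = x * (y * v) := by
          obtain ⟨c2, d2, hv⟩ := key v y hvy hyv
          rw [hv]
          simp only [mul_sub, mul_smul_comm, mul_one]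
          rw [haltr]
        rw [e, hyv, mul_one]
      have h2 : (x * y) * (v * x) = x * x := by
        rw [hmouf x y v, hyv, mul_one]
      calc (x * y) * (v * u)
          = (x * y) * (v * (s • (1 : E) - m • x)) := by rw [← hu]
        _ = s • ((x * y) * v) - m • ((x * y) * (v * x)) := by
            simp only [mul_sub, mul_smul_comm, mul_one]
        _ = s • x - m • (x * x) := by rw [h1, h2]
        _ = x * u := by
            rw [hu]; simp only [mul_sub, mul_smul_comm, mul_one]
        _ = 1 := hxu
    · have h3 : (v * u) * x = v := by
        have e : (v * u) * x = v * (u * x) := by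
          obtain ⟨s2, m2, hx2⟩ := key x u hxu hux
          rw [hx2]
          simp only [mul_sub, mul_smul_comm, mul_one]
          rw [haltr]
        rw [e, hux, mul_one]
      have h4 : (v * u) * (x * v) = v * v := by
        rw [hmouf v u x, hux, mul_one]
      calc (v * u) * (x * y)
          = (v * u) * (x * (c • (1 : E) - d • v)) := by rw [← hy]
        _ = c • ((v * u) * x) - d • ((v * u) * (x * v)) := by
            simp only [mul_sub, mul_smul_comm, mul_one]
        _ = c • v - d • (v * v) := by rw [h3, h4]
        _ = v * y := by
            rw [hy]; simp only [mul_sub, mul_smul_comm, mul_one]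
        _ = 1 := hvy
  refine ⟨⟨1, one_mul 1, one_mul 1⟩, ?_, ?_, ?_⟩
  · rintro x ⟨u, hxu, hux⟩ y ⟨v, hyv, hvy⟩
    obtain ⟨c1, c2⟩ := closure x y u v hxu hux hyv hvy
    exact ⟨v * u, c1, c2⟩
  · rintro a ⟨a', haa', ha'a⟩ b ⟨b', hbb', hb'b⟩
    constructor
    · refine ⟨a' * b, ⟨?_, lip a' a ha'a haa' b⟩, ?_⟩
      · obtain ⟨c1, c2⟩ := closure a' b a b' ha'a haa' hbb' hb'b
        exact ⟨b' * a, c1, c2⟩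
      · rintro w ⟨-, hw⟩
        have h := lip a a' haa' ha'a w
        rw [hw] at h
        exact h.symm
    · refine ⟨b * a', ⟨?_, rip a a' haa' ha'a b⟩, ?_⟩
      · obtain ⟨c1, c2⟩ := closure b a' b' a hbb' hb'b ha'a haa'
        exact ⟨a * b', c1, c2⟩
      · rintro w ⟨-, hw⟩
        have h := rip a' a ha'a haa' w
        rw [hw] at h
        exact h.symm
  · rintro x - y - z -
    exact hmouf x y z
end
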